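/- arXiv:1306.3497 — 3 statements merged into one kernel-verified Lean document; each statement's English description precedes it below -/
import Mathlib

section
/- Let n ≥ 2 and let G be a saturated tropical curve in the interior K° of the standard n-simplex K ⊂ ℝ^n. For each facet F of K, let d_F be the number of intersection points of the closure Ḡ with F, counted with multiplicity (each intersection point counted with the multiplicity of the corresponding edge of G). Then d_F takes the same value for all n+1 facets of K. -/
open Set MeasureTheory
open scoped ENNReal NNReal Classical

noncomputable section

/-- Euclidean space `ℝ^n`. -/
abbrev Euc (n : ℕ) := EuclideanSpace ℝ (Fin n)

/-- The real vector in `ℝ^n` corresponding to an integer vector. -/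
def intVec {n : ℕ} (w : Fin n → ℤ) : Euc n := WithLp.toLp 2 (fun i => (w i : ℝ))

/-- An edge of a tropical curve: its carrier set, its set of endpoints (lying in the
ambient open set), and a chosen integer representative of its weight
(the weight is really the class of `weight` up to sign). -/
structure TropEdge (n : ℕ) where
  carrier : Set (Euc n)
  ends : Finset (Euc n)
  weight : Fin n → ℤ

namespace TropEdge

/-- The real vector corresponding to the chosen representative of the weight. -/
def wR {n : ℕ} (e : TropEdge n) : Euc n := intVec e.weight

/-- The multiplicity of an edge: the natural number `|k|` such that the weight is
`k` times a primitive integral vector, i.e. the gcd of its components. -/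
def mult {n : ℕ} (e : TropEdge n) : ℕ :=
  Finset.univ.gcd fun i => (e.weight i).natAbs

end TropEdge

/-- The half-open segment/ray `{v + t • u : 0 ≤ t < T}`, where `T ∈ (0, ∞]`. -/
def rayTo {n : ℕ} (v u : Euc n) (T : ℝ≥0∞) : Set (Euc n) :=
  {x | ∃ t : ℝ, 0 ≤ t ∧ ENNReal.ofReal t < T ∧ x = v + t • u}

/-- A tropical curve in an open subset `U ⊆ ℝ^n`: a finite vertex set, a finite edge
set, each edge an internal edge (a closed segment contained in `U` with two distinct
vertices as endpoints) or an unbounded edge (`{v + t • u : 0 ≤ t < T} ∩ U` whose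
closure is not contained in `U`), with weights parallel to the edge directions;
distinct edges meet only in common vertices, every vertex lies on at least three
edges, and the balancing condition holds at every vertex. -/
structure TropicalCurve (n : ℕ) (U : Set (Euc n)) : Type where
  verts : Finset (Euc n)
  edges : Finset (TropEdge n)
  verts_mem : ∀ v ∈ verts, v ∈ U
  weight_ne : ∀ e ∈ edges, e.weight ≠ 0
  edge_shape : ∀ e ∈ edges,
    (∃ a ∈ verts, ∃ b ∈ verts, a ≠ b ∧ e.ends = {a, b} ∧
      e.carrier = segment ℝ a b ∧ segment ℝ a b ⊆ U ∧
      ∃ c : ℝ, c ≠ 0 ∧ b - a = c • e.wR) ∨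
    (∃ v ∈ verts, ∃ u : Euc n, u ≠ 0 ∧ ∃ T : ℝ≥0∞, 0 < T ∧
      e.ends = {v} ∧ e.carrier = rayTo v u T ∩ U ∧
      ¬ closure (rayTo v u T ∩ U) ⊆ U ∧
      ∃ c : ℝ, c ≠ 0 ∧ u = c • e.wR)
  edges_meet : ∀ e ∈ edges, ∀ f ∈ edges, e ≠ f →
    ∀ x ∈ e.carrier ∩ f.carrier, x ∈ verts
  three_valent : ∀ v ∈ verts, 3 ≤ (edges.filter fun e => v ∈ e.ends).card
  balanced : ∀ v ∈ verts, ∃ ε : TropEdge n → ℤ,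
    (∀ e ∈ edges, v ∈ e.ends →
      (ε e = 1 ∨ ε e = -1) ∧
      ∃ δ : ℝ, 0 < δ ∧ ∀ t : ℝ, 0 < t → t < δ →
        v + (t * (ε e : ℝ)) • e.wR ∈ e.carrier) ∧
    ∑ e ∈ edges.filter (fun e => v ∈ e.ends), ε e • e.weight = 0

namespace TropicalCurve

variable {n : ℕ} {U : Set (Euc n)}

/-- The underlying set of a tropical curve: the union of the carriers of its edges. -/
def support (G : TropicalCurve n U) : Set (Euc n) :=
  ⋃ e ∈ G.edges, e.carrier

/-- The tropical area of the part of `G` lying in `W`: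
`∑_e length(e ∩ W) · ‖w_e‖` (computed with the one-dimensional Hausdorff measure,
with values in `[0, ∞]`). -/
def areaOn (G : TropicalCurve n U) (W : Set (Euc n)) : ℝ≥0∞ :=
  ∑ e ∈ G.edges, μH[1] (e.carrier ∩ W) * (‖e.wR‖₊ : ℝ≥0∞)

/-- The tropical area of `G`: `∑_e length(e) · ‖w_e‖`. -/
def area (G : TropicalCurve n U) : ℝ≥0∞ :=
  ∑ e ∈ G.edges, μH[1] e.carrier * (‖e.wR‖₊ : ℝ≥0∞)

end TropicalCurve

/-- The standard `n`-simplex: the convex hull of `0` and the standard basis vectors. -/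
def stdSimp (n : ℕ) : Set (Euc n) :=
  convexHull ℝ (insert (0 : Euc n) {x | ∃ i : Fin n, x = EuclideanSpace.single i (1 : ℝ)})

/-- The `n+1` facets of the standard simplex: for `i < n` the facet in `{x_i = 0}`,
and for `i = n` the facet in `{x_1 + ⋯ + x_n = 1}`. -/
def sFacet (n : ℕ) (i : Fin (n + 1)) : Set (Euc n) :=
  if h : (i : ℕ) < n then stdSimp n ∩ {x | x ⟨i, h⟩ = 0}
  else stdSimp n ∩ {x | ∑ j, x j = 1}

/-- The `(n-2)`-skeleton of the boundary of the standard simplex: the union of all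
faces of dimension at most `n - 2`, i.e. of all pairwise intersections of facets. -/
def sSkel (n : ℕ) : Set (Euc n) :=
  ⋃ i : Fin (n + 1), ⋃ j : Fin (n + 1), ⋃ _ : i ≠ j, sFacet n i ∩ sFacet n j

/-- The inward integral normal direction of the `i`-th facet of the standard simplex. -/
def sNormal (n : ℕ) (i : Fin (n + 1)) : Fin n → ℤ :=
  if h : (i : ℕ) < n then Pi.single ⟨i, h⟩ 1 else fun _ => 1

/-- A tropical curve in the interior of the standard simplex is saturated if its closure
avoids the `(n-2)`-skeleton of the boundary and meets the facets perpendicularly: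
every edge whose closure meets a facet has weight parallel to the normal of that facet. -/
def Saturated {n : ℕ} (G : TropicalCurve n (interior (stdSimp n))) : Prop :=
  closure G.support ∩ sSkel n = ∅ ∧
  ∀ e ∈ G.edges, ∀ i : Fin (n + 1),
    (closure e.carrier ∩ sFacet n i).Nonempty →
    ∃ k : ℤ, e.weight = k • sNormal n i

/-- The number of intersection points of the closure of `G` with the `i`-th facet of the
standard simplex, counted with the multiplicities of the corresponding edges. -/
def facetCount {n : ℕ} (G : TropicalCurve n (interior (stdSimp n)))
    (i : Fin (n + 1)) : ℕ :=
  ∑ e ∈ G.edges.filter (fun e => (closure e.carrier ∩ sFacet n i).Nonempty), e.mult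

/-! Orient each edge weight away from its endpoints. Summing the balancing conditions over all
vertices, the two contributions of an internal edge cancel, so the outgoing weights of the
unbounded edges sum to zero. An unbounded edge of a saturated curve reaching the facet `F` has
outgoing weight `m • ν_F`, where `m` is its multiplicity and `ν_F` the primitive outward normal of
`F`; hence `∑_F d_F • ν_F = 0`. As `ν_i = -eᵢ` for `i < n` and `ν_n = (1, …, 1)`, the `i`-th
coordinate of this relation reads `d_n - d_i = 0`. -/

open scoped RealInnerProductSpace

lemma interior_setOf_inner_le {E : Type*} [NormedAddCommGroup E] [InnerProductSpace ℝ E]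
    {a : E} (ha : a ≠ 0) (β : ℝ) : interior {x | ⟪a, x⟫ ≤ β} = {x | ⟪a, x⟫ < β} := by
  have hf : innerSL ℝ a ≠ 0 := fun h => ha (by simpa using congrArg (· a) h)
  have := ((innerSL ℝ a).isOpenMap_of_ne_zero hf).preimage_interior_eq_interior_preimage
    (innerSL ℝ a).continuous (Iic β)
  rw [interior_Iic] at this
  exact this.symm

lemma mul_pos_of_mem_ray {E : Type*} [AddCommGroup E] [Module ℝ E] {S : Set E} {p w : E}
    {s c : ℝ} (hw : w ≠ 0) (hs : s ≠ 0) (hS : ∀ x ∈ S, ∃ θ : ℝ, 0 ≤ θ ∧ x = p + θ • c • w)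
    (h : ∃ δ : ℝ, 0 < δ ∧ ∀ t : ℝ, 0 < t → t < δ → p + (t * s) • w ∈ S) : 0 < s * c := by
  obtain ⟨δ, hδ, hmem⟩ := h
  obtain ⟨θ, hθ, hx⟩ := hS _ (hmem (δ / 2) (by linarith) (by linarith))
  rw [smul_smul] at hx
  have heq : δ / 2 * s = θ * c := smul_left_injective ℝ hw (add_left_cancel hx)
  have : 0 < θ * (s * c) := by
    calc 0 < δ / 2 * s ^ 2 := by positivity
      _ = θ * (s * c) := by linear_combination s * heq
  exact pos_of_mul_pos_right this hθ

lemma pos_inner_of_mem_closure_rayTo {n : ℕ} {v u x a : Euc n} {T : ℝ≥0∞} {W : Set (Euc n)}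
    (hx : x ∈ closure (rayTo v u T ∩ W)) (h : ⟪a, v⟫ < ⟪a, x⟫) : 0 < ⟪a, u⟫ := by
  by_contra! hu
  have hsub : rayTo v u T ∩ W ⊆ {y | ⟪a, y⟫ ≤ ⟪a, v⟫} := by
    rintro _ ⟨⟨t, ht, -, rfl⟩, -⟩
    simp only [mem_ofPred_eq, inner_add_right, real_inner_smul_right]
    nlinarith
  exact h.not_ge (closure_minimal hsub
    (isClosed_le (continuous_const.inner continuous_id) continuous_const) hx)

-- Outward on every facet, whereas `sNormal` is inward on the first `n` facets.
def outNormal (n : ℕ) : Fin (n + 1) → Fin n → ℤ :=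
  Fin.lastCases (fun _ => 1) fun m => -Pi.single m 1

def facetLevel (n : ℕ) : Fin (n + 1) → ℝ :=
  Fin.lastCases 1 fun _ => 0

section Simplex

variable {n : ℕ}

lemma outNormal_last : outNormal n (Fin.last n) = fun _ => 1 := by
  simp [outNormal]

lemma outNormal_castSucc (m : Fin n) : outNormal n m.castSucc = -Pi.single m 1 := by
  simp [outNormal]

lemma facetLevel_last : facetLevel n (Fin.last n) = 1 := by
  simp [facetLevel]

lemma facetLevel_castSucc (m : Fin n) : facetLevel n m.castSucc = 0 := by
  simp [facetLevel]

lemma sNormal_last : sNormal n (Fin.last n) = outNormal n (Fin.last n) := by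
  simp [sNormal, outNormal_last]

lemma sNormal_castSucc (m : Fin n) : sNormal n m.castSucc = -outNormal n m.castSucc := by
  simp [sNormal, outNormal_castSucc]

lemma sFacet_last : sFacet n (Fin.last n) = stdSimp n ∩ {x | ∑ i, x i = 1} := by
  simp [sFacet]

lemma sFacet_castSucc (m : Fin n) : sFacet n m.castSucc = stdSimp n ∩ {x | x m = 0} := by
  simp [sFacet]

lemma outNormal_injective : Function.Injective (outNormal n) := by
  intro i j h
  induction i using Fin.lastCases <;> induction j using Fin.lastCases
  · rfl
  · rename_i m
    simpa [outNormal_last, outNormal_castSucc] using congrFun h m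
  · rename_i m
    simpa [outNormal_last, outNormal_castSucc] using congrFun h m
  · rename_i m m'
    rw [outNormal_castSucc, outNormal_castSucc, neg_inj] at h
    simpa [Pi.single_apply, eq_comm] using congrFun h m

lemma eq_last_of_sum_smul_outNormal_eq_zero {d : Fin (n + 1) → ℕ}
    (h : ∑ j, d j • outNormal n j = 0) (j : Fin (n + 1)) : d j = d (Fin.last n) := by
  induction j using Fin.lastCases with
  | last => rfl
  | cast m =>
    have := congrFun h m
    simp only [nsmul_eq_mul, Finset.sum_apply, Pi.mul_apply, Pi.natCast_apply,
      Fin.sum_univ_castSucc, outNormal_castSucc, Pi.neg_apply, Pi.single_apply, mul_neg, mul_ite,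
      mul_one, mul_zero, Finset.sum_neg_distrib, Finset.sum_ite_eq, Finset.mem_univ, if_true,
      outNormal_last, Pi.zero_apply] at this
    omega

lemma intVec_smul (k : ℤ) (w : Fin n → ℤ) : intVec (k • w) = (k : ℝ) • intVec w := by
  ext i
  simp [intVec]

lemma intVec_outNormal_ne_zero [NeZero n] (j : Fin (n + 1)) : intVec (outNormal n j) ≠ 0 := by
  intro h
  induction j using Fin.lastCases with
  | last => simpa [intVec, outNormal_last] using congrArg (fun x : Euc n => x 0) h
  | cast m => simpa [intVec, outNormal_castSucc] using congrArg (fun x : Euc n => x m) h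

lemma inner_intVec (w : Fin n → ℤ) (x : Euc n) : ⟪intVec w, x⟫ = ∑ i, (w i : ℝ) * x i := by
  simp [intVec, PiLp.inner_apply, mul_comm]

lemma inner_outNormal_last (x : Euc n) :
    ⟪intVec (outNormal n (Fin.last n)), x⟫ = ∑ i, x i := by
  simp [inner_intVec, outNormal_last]

lemma inner_outNormal_castSucc (m : Fin n) (x : Euc n) :
    ⟪intVec (outNormal n m.castSucc), x⟫ = -x m := by
  simp [inner_intVec, outNormal_castSucc, Pi.single_apply]

lemma forall_inner_outNormal_le_iff (x : Euc n) :
    (∀ j, ⟪intVec (outNormal n j), x⟫ ≤ facetLevel n j) ↔ (∀ i, 0 ≤ x i) ∧ ∑ i, x i ≤ 1 := by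
  simp only [Fin.forall_fin_succ', inner_outNormal_castSucc, inner_outNormal_last,
    facetLevel_castSucc, facetLevel_last, neg_nonpos]

lemma inner_outNormal_single_le (j : Fin (n + 1)) (i : Fin n) :
    ⟪intVec (outNormal n j), EuclideanSpace.single i 1⟫ ≤ facetLevel n j := by
  induction j using Fin.lastCases with
  | last => simp [inner_outNormal_last, PiLp.single_apply, facetLevel_last]
  | cast m =>
    simp only [inner_outNormal_castSucc, PiLp.single_apply, facetLevel_castSucc, neg_nonpos]
    split_ifs <;> norm_num

lemma mem_stdSimp_of_nonneg_of_sum_le_one {x : Euc n} (hx0 : ∀ i, 0 ≤ x i)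
    (hx1 : ∑ i, x i ≤ 1) : x ∈ stdSimp n := by
  have hsum : x = ∑ o : Option (Fin n), o.elim (1 - ∑ i, x i) (fun i => x i) •
      o.elim 0 (fun i => EuclideanSpace.single i 1) := by
    simpa [Fintype.sum_option, EuclideanSpace.basisFun_apply] using
      ((EuclideanSpace.basisFun (Fin n) ℝ).sum_repr x).symm
  rw [hsum]
  refine (convex_convexHull ℝ _).sum_mem ?_ ?_ ?_
  · rintro (_ | i) _
    exacts [sub_nonneg.2 hx1, hx0 i]
  · simp [Fintype.sum_option]
  · rintro (_ | i) _
    exacts [subset_convexHull ℝ _ (mem_insert _ _), subset_convexHull ℝ _ (.inr ⟨i, rfl⟩)]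

lemma stdSimp_eq_setOf_inner_le :
    stdSimp n = {x | ∀ j, ⟪intVec (outNormal n j), x⟫ ≤ facetLevel n j} := by
  refine Subset.antisymm (convexHull_min ?_ ?_) fun x hx => ?_
  · rintro x (rfl | ⟨i, rfl⟩) j
    · induction j using Fin.lastCases <;> simp [facetLevel_last, facetLevel_castSucc]
    · exact inner_outNormal_single_le j i
  · simp only [ofPred_forall]
    exact convex_iInter fun j => convex_halfSpace_le (innerₛₗ ℝ _).isLinear _
  · obtain ⟨hx0, hx1⟩ := (forall_inner_outNormal_le_iff x).1 hx
    exact mem_stdSimp_of_nonneg_of_sum_le_one hx0 hx1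

lemma isClosed_stdSimp : IsClosed (stdSimp n) := by
  rw [stdSimp_eq_setOf_inner_le, ofPred_forall]
  exact isClosed_iInter fun j => isClosed_le (continuous_const.inner continuous_id) continuous_const

lemma interior_stdSimp [NeZero n] :
    interior (stdSimp n) = {x | ∀ j, ⟪intVec (outNormal n j), x⟫ < facetLevel n j} := by
  rw [stdSimp_eq_setOf_inner_le, ofPred_forall, interior_iInter_of_finite, ofPred_forall]
  simp_rw [interior_setOf_inner_le (intVec_outNormal_ne_zero _)]

lemma sFacet_eq (j : Fin (n + 1)) :
    sFacet n j = stdSimp n ∩ {x | ⟪intVec (outNormal n j), x⟫ = facetLevel n j} := by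
  induction j using Fin.lastCases with
  | last =>
    rw [sFacet_last, facetLevel_last]
    simp_rw [inner_outNormal_last]
  | cast m =>
    rw [sFacet_castSucc, facetLevel_castSucc]
    simp_rw [inner_outNormal_castSucc, neg_eq_zero]

lemma inner_lt_of_mem_interior_of_mem_sFacet [NeZero n] {x y : Euc n} {j : Fin (n + 1)}
    (hy : y ∈ interior (stdSimp n)) (hx : x ∈ sFacet n j) :
    ⟪intVec (outNormal n j), y⟫ < ⟪intVec (outNormal n j), x⟫ := by
  rw [interior_stdSimp] at hy
  rw [sFacet_eq] at hx
  exact hx.2 ▸ hy j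

lemma notMem_interior_of_mem_sFacet [NeZero n] {x : Euc n} {j : Fin (n + 1)}
    (hx : x ∈ sFacet n j) : x ∉ interior (stdSimp n) :=
  fun h => (inner_lt_of_mem_interior_of_mem_sFacet h hx).false

lemma exists_mem_sFacet [NeZero n] {x : Euc n} (hx : x ∈ stdSimp n)
    (hx' : x ∉ interior (stdSimp n)) : ∃ j, x ∈ sFacet n j := by
  rw [stdSimp_eq_setOf_inner_le] at hx
  rw [interior_stdSimp] at hx'
  simp only [mem_ofPred_eq, not_forall, not_lt] at hx'
  obtain ⟨j, hj⟩ := hx'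
  refine ⟨j, ?_⟩
  rw [sFacet_eq, stdSimp_eq_setOf_inner_le]
  exact ⟨hx, (hx j).antisymm hj⟩

end Simplex

namespace TropEdge

variable {n : ℕ} {e : TropEdge n}

lemma wR_ne_zero (h : e.weight ≠ 0) : e.wR ≠ 0 := by
  refine fun h0 => h (funext fun i => ?_)
  simpa [TropEdge.wR, intVec] using congrArg (fun x : Euc n => x i) h0

lemma mult_ne_zero (h : e.weight ≠ 0) : e.mult ≠ 0 := by
  simp only [TropEdge.mult, ne_eq, Finset.gcd_eq_zero_iff, Finset.mem_univ, true_implies,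
    Int.natAbs_eq_zero]
  exact fun h' => h (funext h')

lemma mult_eq_natAbs [NeZero n] {k : ℤ} {j : Fin (n + 1)} (h : e.weight = k • outNormal n j) :
    e.mult = k.natAbs := by
  have hgcd : Finset.univ.gcd (fun i => (outNormal n j i).natAbs) = 1 := by
    refine Nat.dvd_one.1 ?_
    induction j using Fin.lastCases with
    | last =>
      simpa [outNormal_last] using
        Finset.gcd_dvd (f := fun i => (outNormal n (Fin.last n) i).natAbs) (Finset.mem_univ 0)
    | cast m =>
      simpa [outNormal_castSucc] using
        Finset.gcd_dvd (f := fun i => (outNormal n m.castSucc i).natAbs) (Finset.mem_univ m)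
  simp [TropEdge.mult, h, Int.natAbs_mul, Finset.gcd_mul_left, hgcd]

lemma zsmul_weight_eq_mult_smul [NeZero n] {k s : ℤ} {j : Fin (n + 1)}
    (h : e.weight = k • outNormal n j) (hs : s = 1 ∨ s = -1) (hsk : 0 < s * k) :
    s • e.weight = e.mult • outNormal n j := by
  have : s * k = k.natAbs := by rcases hs with rfl | rfl <;> omega
  rw [h, smul_smul, this, natCast_zsmul, e.mult_eq_natAbs h]

end TropEdge

namespace TropicalCurve

variable {n : ℕ} {U : Set (Euc n)}

def IsOrientation (G : TropicalCurve n U) (ε : Euc n → TropEdge n → ℤ) : Prop :=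
  ∀ v ∈ G.verts, ∀ e ∈ G.edges, v ∈ e.ends → (ε v e = 1 ∨ ε v e = -1) ∧
    ∃ δ : ℝ, 0 < δ ∧ ∀ t : ℝ, 0 < t → t < δ → v + (t * (ε v e : ℝ)) • e.wR ∈ e.carrier

def outflow (G : TropicalCurve n U) (ε : Euc n → TropEdge n → ℤ) (e : TropEdge n) :
    Fin n → ℤ :=
  ∑ v ∈ G.verts.filter (· ∈ e.ends), ε v e • e.weight

lemma exists_isOrientation_balanced (G : TropicalCurve n U) :
    ∃ ε, G.IsOrientation ε ∧
      ∀ v ∈ G.verts, ∑ e ∈ G.edges.filter (v ∈ ·.ends), ε v e • e.weight = 0 := by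
  choose ε hε using G.balanced
  refine ⟨fun v => if hv : v ∈ G.verts then ε v hv else 0, fun v hv => ?_, fun v hv => ?_⟩
  · simpa [dif_pos hv] using (hε v hv).1
  · simpa [dif_pos hv] using (hε v hv).2

lemma sum_outflow_eq_zero (G : TropicalCurve n U) {ε : Euc n → TropEdge n → ℤ}
    (hbal : ∀ v ∈ G.verts, ∑ e ∈ G.edges.filter (v ∈ ·.ends), ε v e • e.weight = 0) :
    ∑ e ∈ G.edges, G.outflow ε e = 0 := by
  unfold outflow
  rw [Finset.sum_comm' (t' := G.verts) (s' := fun v => G.edges.filter (v ∈ ·.ends))]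
  · exact Finset.sum_eq_zero hbal
  · simp only [Finset.mem_filter]
    tauto

variable {G : TropicalCurve n U} {ε : Euc n → TropEdge n → ℤ} {e : TropEdge n} {v : Euc n}

lemma IsOrientation.sign_mul_pos (hε : G.IsOrientation ε) (hv : v ∈ G.verts) (he : e ∈ G.edges)
    (hve : v ∈ e.ends) {c : ℝ} (hS : ∀ x ∈ e.carrier, ∃ θ : ℝ, 0 ≤ θ ∧ x = v + θ • c • e.wR) :
    0 < ε v e * c := by
  obtain ⟨hsign, hδ⟩ := hε v hv e he hve
  exact mul_pos_of_mem_ray (TropEdge.wR_ne_zero (G.weight_ne e he))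
    (by rcases hsign with h | h <;> simp [h]) hS hδ

lemma IsOrientation.outflow_eq_zero_of_segment (hε : G.IsOrientation ε) (he : e ∈ G.edges)
    {a b : Euc n} (ha : a ∈ G.verts) (hb : b ∈ G.verts) (hab : a ≠ b) (hends : e.ends = {a, b})
    (hcar : e.carrier = segment ℝ a b) {c : ℝ} (hba : b - a = c • e.wR) :
    G.outflow ε e = 0 := by
  have hfilter : G.verts.filter (· ∈ e.ends) = {a, b} := by
    ext x
    simp only [Finset.mem_filter, hends, Finset.mem_insert, Finset.mem_singleton]
    constructor
    · exact And.right
    · rintro (rfl | rfl) <;> simp [ha, hb]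
  have hpos_a : 0 < ε a e * c := hε.sign_mul_pos ha he (by simp [hends]) fun x hx => by
    rw [hcar, segment_eq_image', hba] at hx
    obtain ⟨θ, hθ, rfl⟩ := hx
    exact ⟨θ, hθ.1, rfl⟩
  have hpos_b : 0 < ε b e * -c := hε.sign_mul_pos hb he (by simp [hends]) fun x hx => by
    rw [hcar, segment_symm, segment_eq_image', ← neg_sub, hba, ← neg_smul] at hx
    obtain ⟨θ, hθ, rfl⟩ := hx
    exact ⟨θ, hθ.1, rfl⟩
  have hcancel : ε a e + ε b e = 0 := by
    rcases (hε a ha e he (by simp [hends])).1 with h₁ | h₁ <;>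
      rcases (hε b hb e he (by simp [hends])).1 with h₂ | h₂ <;>
      simp only [h₁, h₂, Int.cast_one, Int.cast_neg] at hpos_a hpos_b ⊢ <;> first | rfl | linarith
  rw [outflow, hfilter, Finset.sum_pair hab, ← add_smul, hcancel, zero_smul]

end TropicalCurve

namespace Saturated

open TropicalCurve

variable {n : ℕ} {G : TropicalCurve n (interior (stdSimp n))} {ε : Euc n → TropEdge n → ℤ}
  {e : TropEdge n} {j : Fin (n + 1)}

lemma exists_weight_eq_smul_outNormal (hG : Saturated G) (he : e ∈ G.edges)
    (hj : (closure e.carrier ∩ sFacet n j).Nonempty) : ∃ k : ℤ, e.weight = k • outNormal n j := by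
  obtain ⟨k, hk⟩ := hG.2 e he j hj
  induction j using Fin.lastCases with
  | last => exact ⟨k, by rw [hk, sNormal_last]⟩
  | cast m => exact ⟨-k, by rw [hk, sNormal_castSucc, smul_neg, neg_smul]⟩

lemma outflow_eq_of_ray [NeZero n] (hG : Saturated G) (hε : G.IsOrientation ε)
    (he : e ∈ G.edges) {v u : Euc n} {T : ℝ≥0∞} (hv : v ∈ G.verts) (hends : e.ends = {v})
    (hcar : e.carrier = rayTo v u T ∩ interior (stdSimp n)) {c : ℝ} (huc : u = c • e.wR)
    (hj : (closure e.carrier ∩ sFacet n j).Nonempty) :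
    G.outflow ε e = e.mult • outNormal n j := by
  obtain ⟨k, hk⟩ := hG.exists_weight_eq_smul_outNormal he hj
  obtain ⟨x, hx, hxj⟩ := hj
  have hve : v ∈ e.ends := by simp [hends]
  have hεc : 0 < ε v e * c := hε.sign_mul_pos hv he hve fun y hy => by
    rw [hcar] at hy
    obtain ⟨⟨t, ht, -, rfl⟩, -⟩ := hy
    exact ⟨t, ht, by rw [huc]⟩
  -- the ray leaves the simplex through the facet `j`, so `u` points along `outNormal n j`
  have hck : 0 < c * k := by
    have hout := pos_inner_of_mem_closure_rayTo (hcar ▸ hx)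
      (inner_lt_of_mem_interior_of_mem_sFacet (G.verts_mem v hv) hxj)
    rw [huc, TropEdge.wR, hk, intVec_smul, smul_smul, real_inner_smul_right,
      real_inner_self_eq_norm_sq] at hout
    exact pos_of_mul_pos_left hout (sq_nonneg _)
  have hεk : 0 < ε v e * k := by
    have : 0 < (ε v e * k : ℝ) * c ^ 2 := by nlinarith
    exact_mod_cast pos_of_mul_pos_left this (sq_nonneg c)
  have hfilter : G.verts.filter (· ∈ e.ends) = {v} := by
    ext x
    simp only [Finset.mem_filter, hends, Finset.mem_singleton]
    exact ⟨And.right, fun h => ⟨h ▸ hv, h⟩⟩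
  rw [outflow, hfilter, Finset.sum_singleton]
  exact e.zsmul_weight_eq_mult_smul hk (hε v hv e he hve).1 hεk

lemma outflow_eq_sum_facets [NeZero n] (hG : Saturated G) (hε : G.IsOrientation ε)
    (he : e ∈ G.edges) :
    G.outflow ε e =
      ∑ j, (if (closure e.carrier ∩ sFacet n j).Nonempty then e.mult else 0) • outNormal n j := by
  rcases G.edge_shape e he with
    ⟨a, ha, b, hb, hab, hends, hcar, hsub, c, -, hba⟩ |
    ⟨v, hv, u, -, T, -, hends, hcar, hncl, c, -, huc⟩
  · have hclosure : closure e.carrier ⊆ interior (stdSimp n) := by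
      have : IsClosed (segment ℝ a b) := by
        rw [← convexHull_pair]
        exact ((toFinite _).isCompact_convexHull ℝ).isClosed
      rwa [hcar, this.closure_eq]
    have hmiss : ∀ j, ¬ (closure e.carrier ∩ sFacet n j).Nonempty :=
      fun j ⟨x, hx, hxj⟩ => notMem_interior_of_mem_sFacet hxj (hclosure hx)
    simp only [hmiss, if_false, zero_smul, Finset.sum_const_zero]
    exact hε.outflow_eq_zero_of_segment he ha hb hab hends hcar hba
  · have hclosure : closure e.carrier ⊆ stdSimp n :=
      closure_minimal (hcar ▸ inter_subset_right.trans interior_subset) isClosed_stdSimp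
    obtain ⟨x, hx, hxint⟩ := not_subset.1 (hcar ▸ hncl)
    obtain ⟨j, hxj⟩ := exists_mem_sFacet (hclosure hx) hxint
    have hflow := fun {j} => hG.outflow_eq_of_ray hε he hv hends hcar huc (j := j)
    have hmeet : ∀ i, (closure e.carrier ∩ sFacet n i).Nonempty ↔ i = j := fun i =>
      ⟨fun hi => outNormal_injective <| smul_right_injective _
        (TropEdge.mult_ne_zero (G.weight_ne e he)) <| (hflow hi).symm.trans (hflow ⟨x, hx, hxj⟩),
        fun hi => hi ▸ ⟨x, hx, hxj⟩⟩
    simp only [hmeet, ite_smul, zero_smul, Finset.sum_ite_eq', Finset.mem_univ, if_true]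
    exact hflow ⟨x, hx, hxj⟩

lemma sum_facetCount_smul_outNormal [NeZero n] (hG : Saturated G) :
    ∑ j, facetCount G j • outNormal n j = 0 := by
  obtain ⟨ε, hε, hbal⟩ := G.exists_isOrientation_balanced
  rw [← G.sum_outflow_eq_zero hbal,
    Finset.sum_congr rfl fun e he => hG.outflow_eq_sum_facets hε he, Finset.sum_comm]
  simp only [facetCount, Finset.sum_filter, Finset.sum_smul]

end Saturated

theorem facet_counts_equal_general (n : ℕ)
    (G : TropicalCurve n (interior (stdSimp n))) (hG : Saturated G) :
    ∀ i j : Fin (n + 1), facetCount G i = facetCount G j := by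
  rcases n.eq_zero_or_pos with rfl | hpos
  · exact fun i j => congrArg _ (Subsingleton.elim (α := Fin 1) i j)
  have : NeZero n := ⟨hpos.ne'⟩
  have h := eq_last_of_sum_smul_outNormal_eq_zero hG.sum_facetCount_smul_outNormal
  exact fun i j => (h i).trans (h j).symm

/-- a saturated tropical curve in the interior of the standard simplex
meets all facets of the simplex in the same number of points, counted with
multiplicity. -/
theorem facet_counts_equal (n : ℕ) (hn : 2 ≤ n)
    (G : TropicalCurve n (interior (stdSimp n))) (hG : Saturated G) :
    ∀ i j : Fin (n + 1), facetCount G i = facetCount G j :=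
  facet_counts_equal_general n G hG
end
end

section
/- Let n ≥ 2 and let G be a saturated tropical curve in the interior K° of the standard n-simplex K ⊂ ℝ^n, of degree d. Suppose that for each i ∈ {1, …, n} we are given d paths P_{i1}, …, P_{id} of direction i in G (each a chain of segments of edges of G in which consecutive segments share an endpoint and whose union has injective projection to the i-th coordinate) such that every edge e of G with w_e^i ≠ 0 is traversed by at least one of P_{i1}, …, P_{id}. For a path P of direction i, let V_0(P) be the set of vertices Q of G lying on P for which there exists an edge e(Q) of G having Q as an endpoint, not contained in P, whose weight has nonzero j-th component for some j ≠ i. Then every vertex of G belongs to V_0(P_{ik}) for some i ∈ {1, …, n−1} and k ∈ {1, …, d}. -/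
open Set MeasureTheory
open scoped ENNReal NNReal Classical

noncomputable section

/-!
At a vertex `v` the balancing data give every edge `e` at `v` an outgoing germ
`t ↦ v + t • u e`, `t > 0`, with `u e` parallel to `w_e`. If `v` lay in no `V₀(P_{ik})` with
`i < n - 1`, pick `i` such that some edge at `v` has `w^i ≠ 0` (or `i = n - 1` if there is none).
Then any two edges at `v` either lie on one path `P_{ik}`, whose projection to `x_i` is
injective, or are both parallel to the `i`-th axis. In both cases every edge at `v` moves in
`x_i`, and by pigeonhole two of the at least three edges at `v` leave `v` on the same side in
`x_i`; injectivity of the projection then makes their germs coincide, so the two edges share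
infinitely many points, whereas distinct edges meet only in vertices.
-/

open Filter Topology

section Germs

variable {E : Type*} [AddCommGroup E] [Module ℝ E]

def LeavesInto (s : Set E) (v u : E) : Prop :=
  ∀ᶠ t in 𝓝[>] (0 : ℝ), v + t • u ∈ s

theorem LeavesInto.mono {s s' : Set E} {v u : E} (h : LeavesInto s v u) (hs : s ⊆ s') :
    LeavesInto s' v u :=
  Filter.Eventually.mono h fun _ ht => hs ht

theorem LeavesInto.infinite {s : Set E} {v u : E} (h : LeavesInto s v u) (hu : u ≠ 0) :
    s.Infinite := by
  obtain ⟨δ, hδ, hsub⟩ := mem_nhdsGT_iff_exists_Ioo_subset.mp h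
  have hinj : Function.Injective fun t : ℝ => v + t • u := fun t t' htt' =>
    smul_left_injective ℝ hu (add_left_cancel htt')
  exact ((Set.Ioo_infinite hδ).image hinj.injOn).mono (Set.image_subset_iff.mpr hsub)

theorem LeavesInto.eq_zero_of_injOn {S : Set E} {v u : E} {φ : E →ₗ[ℝ] ℝ}
    (h : LeavesInto S v u) (hS : InjOn φ S) (hv : v ∈ S) (hu : φ u = 0) : u = 0 := by
  obtain ⟨t, ht, htpos⟩ := (h.and self_mem_nhdsWithin).exists
  have : v + t • u = v := hS ht hv (by simp [hu])
  exact (smul_eq_zero.mp (add_eq_left.mp this)).resolve_left htpos.ne'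

theorem LeavesInto.inter_of_injOn {s s' S : Set E} {v u u' : E} {φ : E →ₗ[ℝ] ℝ}
    (hS : InjOn φ S) (h : LeavesInto (s ∩ S) v u) (h' : LeavesInto (s' ∩ S) v u')
    (hsign : 0 < φ u * φ u') : LeavesInto (s ∩ s') v u := by
  set r := φ u / φ u'
  have hu' : φ u' ≠ 0 := by rintro h0; simp [h0] at hsign
  have hr : 0 < r := div_pos_iff.mpr (mul_pos_iff.mp hsign)
  have hscale : Tendsto (fun t => t * r) (𝓝[>] 0) (𝓝[>] 0) :=
    tendsto_nhdsWithin_iff.2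
      ⟨tendsto_nhdsWithin_of_tendsto_nhds (by simpa using (continuous_mul_const r).tendsto 0),
        eventually_mem_nhdsWithin.mono fun t ht => mul_pos ht hr⟩
  filter_upwards [h, hscale.eventually h'] with t ⟨hs, hS₁⟩ ⟨hs', hS₂⟩
  have : v + t • u = v + (t * r) • u' := hS hS₁ hS₂ (by
    simp only [map_add, map_smul, smul_eq_mul, r]
    field_simp)
  exact ⟨hs, this ▸ hs'⟩

end Germs

theorem Finset.exists_ne_mul_pos {α R : Type*} [Ring R] [LinearOrder R] [IsStrictOrderedRing R]
    {s : Finset α} (hs : 2 < s.card) {g : α → R} (hg : ∀ a ∈ s, g a ≠ 0) :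
    ∃ a ∈ s, ∃ b ∈ s, a ≠ b ∧ 0 < g a * g b := by
  have hcard : (Finset.univ : Finset Prop).card < s.card := by simpa using hs
  obtain ⟨a, ha, b, hb, hab, hsign⟩ := Finset.exists_ne_map_eq_of_card_lt_of_maps_to hcard
    (f := fun x => 0 < g x) fun x _ => Finset.mem_univ _
  refine ⟨a, ha, b, hb, hab, ?_⟩
  have hsign : 0 < g a ↔ 0 < g b := Eq.to_iff hsign
  rcases (hg a ha).lt_or_gt with hneg | hpos
  · exact mul_pos_of_neg_of_neg hneg
      (((hg b hb).lt_or_gt).resolve_right fun h => hneg.not_gt (hsign.mpr h))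
  · exact mul_pos hpos (hsign.mp hpos)

def TropEdge.IsAxisParallel {n : ℕ} (e : TropEdge n) (i : Fin n) : Prop :=
  ∀ j, j ≠ i → e.weight j = 0

theorem TropEdge.IsAxisParallel.weight_ne_zero {n : ℕ} {e : TropEdge n} {i : Fin n}
    (he : e.IsAxisParallel i) (hw : e.weight ≠ 0) : e.weight i ≠ 0 := fun hi =>
  hw <| funext fun j => if hj : j = i then hj ▸ hi else he j hj

def AlignedAlong {n : ℕ} (i : Fin n) (e f : TropEdge n) : Prop :=
  (∃ S : Set (Euc n), InjOn (fun x => x i) S ∧ e.carrier ⊆ S ∧ f.carrier ⊆ S) ∨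
    e.IsAxisParallel i ∧ f.IsAxisParallel i

namespace TropicalCurve

variable {n : ℕ} {U : Set (Euc n)} (G : TropicalCurve n U)

def edgesAt (v : Euc n) : Finset (TropEdge n) :=
  G.edges.filter fun e => v ∈ e.ends

variable {G}

@[simp]
theorem mem_edgesAt {v : Euc n} {e : TropEdge n} :
    e ∈ G.edgesAt v ↔ e ∈ G.edges ∧ v ∈ e.ends :=
  Finset.mem_filter

theorem mem_carrier_of_mem_edgesAt {v : Euc n} {e : TropEdge n} (he : e ∈ G.edgesAt v) :
    v ∈ e.carrier := by
  obtain ⟨he, hv⟩ := mem_edgesAt.mp he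
  rcases G.edge_shape e he with
    ⟨a, -, b, -, -, hends, hcar, -⟩ | ⟨w, hw, u, -, T, hT, hends, hcar, -⟩
  · rw [hends, Finset.mem_insert, Finset.mem_singleton] at hv
    rw [hcar]
    rcases hv with rfl | rfl
    exacts [left_mem_segment ℝ _ _, right_mem_segment ℝ _ _]
  · rw [hends, Finset.mem_singleton] at hv
    subst hv
    rw [hcar]
    exact ⟨⟨0, le_rfl, by simpa using hT, by simp⟩, G.verts_mem _ hw⟩

theorem exists_leavesInto {v : Euc n} (hv : v ∈ G.verts) :
    ∃ u : TropEdge n → Euc n, ∀ e ∈ G.edgesAt v,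
      LeavesInto e.carrier v (u e) ∧ ∀ j, u e j = 0 ↔ e.weight j = 0 := by
  obtain ⟨ε, hε, -⟩ := G.balanced v hv
  refine ⟨fun e => (ε e : ℝ) • e.wR, fun e he => ?_⟩
  obtain ⟨he, hve⟩ := mem_edgesAt.mp he
  obtain ⟨hsign, δ, hδ, hmem⟩ := hε e he hve
  have hε0 : (ε e : ℝ) ≠ 0 := by rcases hsign with h | h <;> simp [h]
  refine ⟨?_, fun j => ?_⟩
  · filter_upwards [Ioo_mem_nhdsGT hδ] with t ht
    simpa [mul_smul] using hmem t ht.1 ht.2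
  · simp [TropEdge.wR, intVec, hε0]

theorem not_leavesInto_inter {e f : TropEdge n} (he : e ∈ G.edges) (hf : f ∈ G.edges)
    (hef : e ≠ f) {v u : Euc n} (hu : u ≠ 0) : ¬ LeavesInto (e.carrier ∩ f.carrier) v u :=
  fun h => (h.infinite hu).not_finite <| G.verts.finite_toSet.subset
    fun x hx => G.edges_meet e he f hf hef x hx

theorem exists_injOn_leavesInto_of_alignedAlong {v : Euc n} {u : TropEdge n → Euc n}
    (hu : ∀ e ∈ G.edgesAt v,
      LeavesInto e.carrier v (u e) ∧ ∀ j, u e j = 0 ↔ e.weight j = 0)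
    {i : Fin n} {e f : TropEdge n} (he : e ∈ G.edgesAt v) (hf : f ∈ G.edgesAt v)
    (h : AlignedAlong i e f) :
    ∃ S, InjOn (fun x => x i) S ∧ v ∈ S ∧
      LeavesInto S v (u e) ∧ LeavesInto S v (u f) := by
  rcases h with ⟨S, hS, heS, hfS⟩ | ⟨heax, hfax⟩
  · exact ⟨S, hS, heS (mem_carrier_of_mem_edgesAt he), (hu e he).1.mono heS,
      (hu f hf).1.mono hfS⟩
  · refine ⟨{x | ∀ j ≠ i, x j = v j}, fun x hx y hy hxy => ?_, fun _ _ => rfl, ?_, ?_⟩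
    · ext j
      by_cases hj : j = i
      · exact hj ▸ hxy
      · rw [hx j hj, hy j hj]
    · exact Eventually.of_forall fun t j hj => by simp [((hu e he).2 j).mpr (heax j hj)]
    · exact Eventually.of_forall fun t j hj => by simp [((hu f hf).2 j).mpr (hfax j hj)]

theorem exists_not_alignedAlong {v : Euc n} (hv : v ∈ G.verts) (i : Fin n) :
    ∃ e ∈ G.edgesAt v, ∃ f ∈ G.edgesAt v, ¬ AlignedAlong i e f := by
  by_contra! h
  obtain ⟨u, hu⟩ := G.exists_leavesInto hv
  let φ : Euc n →ₗ[ℝ] ℝ := (EuclideanSpace.proj i : Euc n →L[ℝ] ℝ)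
  have hui : ∀ e ∈ G.edgesAt v, φ (u e) ≠ 0 := by
    intro e he hφ
    obtain ⟨S, hS, hvS, heS, -⟩ :=
      exists_injOn_leavesInto_of_alignedAlong hu he he (h e he e he)
    have h0 := heS.eq_zero_of_injOn (φ := φ) hS hvS hφ
    exact G.weight_ne e (mem_edgesAt.mp he).1 <| funext fun j => ((hu e he).2 j).mp (by simp [h0])
  obtain ⟨e, he, f, hf, hef, hsign⟩ := Finset.exists_ne_mul_pos (G.three_valent v hv) hui
  obtain ⟨S, hS, -, heS, hfS⟩ := exists_injOn_leavesInto_of_alignedAlong hu he hf (h e he f hf)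
  exact not_leavesInto_inter (mem_edgesAt.mp he).1 (mem_edgesAt.mp hf).1 hef
    (fun h0 => hui e he (by simp [h0]))
    (LeavesInto.inter_of_injOn (φ := φ) hS ((hu e he).1.and heS) ((hu f hf).1.and hfS) hsign)

theorem alignedAlong_of_forall_traversed {ι : Type*} {P : ι → Set (Euc n)} {i : Fin n}
    (hinj : ∀ k, InjOn (fun x => x i) (P k))
    (htrav : ∀ e ∈ G.edges, e.weight i ≠ 0 → ∃ k, e.carrier ⊆ P k)
    {v : Euc n} {k₀ : ι} (hv : v ∈ P k₀)
    (hsplit : ∀ k, v ∈ P k → ∀ e ∈ G.edgesAt v, e.carrier ⊆ P k ∨ e.IsAxisParallel i)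
    {e f : TropEdge n} (he : e ∈ G.edgesAt v) (hf : f ∈ G.edgesAt v) : AlignedAlong i e f := by
  have hpath : ∀ g ∈ G.edgesAt v, g.IsAxisParallel i →
      ∃ k, v ∈ P k ∧ g.carrier ⊆ P k := by
    intro g hg hga
    have hgG := (mem_edgesAt.mp hg).1
    obtain ⟨k, hk⟩ := htrav g hgG (hga.weight_ne_zero (G.weight_ne g hgG))
    exact ⟨k, hk (mem_carrier_of_mem_edgesAt hg), hk⟩
  by_cases hea : e.IsAxisParallel i <;> by_cases hfa : f.IsAxisParallel i
  · exact Or.inr ⟨hea, hfa⟩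
  · obtain ⟨k, hvk, hek⟩ := hpath e he hea
    exact Or.inl ⟨P k, hinj k, hek, (hsplit k hvk f hf).resolve_right hfa⟩
  · obtain ⟨k, hvk, hfk⟩ := hpath f hf hfa
    exact Or.inl ⟨P k, hinj k, (hsplit k hvk e he).resolve_right hea, hfk⟩
  · exact Or.inl ⟨P k₀, hinj k₀, (hsplit k₀ hv e he).resolve_right hea,
      (hsplit k₀ hv f hf).resolve_right hfa⟩

end TropicalCurve

theorem cover_by_paths_general (n : ℕ) (hn : 2 ≤ n) (d : ℕ)
    (G : TropicalCurve n (interior (stdSimp n)))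
    (PS : Fin n → Fin d → Set (Euc n))
    (hinj : ∀ i k, Set.InjOn (fun x => x i) (PS i k))
    (htrav : ∀ i : Fin n, ∀ e ∈ G.edges, e.weight i ≠ 0 →
      ∃ k : Fin d, e.carrier ⊆ PS i k) :
    ∀ v ∈ G.verts, ∃ i : Fin n, (i : ℕ) < n - 1 ∧ ∃ k : Fin d,
      v ∈ PS i k ∧ ∃ e ∈ G.edges, v ∈ e.ends ∧ ¬ e.carrier ⊆ PS i k ∧
        ∃ j : Fin n, j ≠ i ∧ e.weight j ≠ 0 := by
  intro v hv
  by_contra! hcon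
  obtain ⟨i, hi⟩ :
      ∃ i : Fin n, ∀ e ∈ G.edgesAt v, ∀ f ∈ G.edgesAt v, AlignedAlong i e f := by
    by_cases h : ∃ i : Fin n, (i : ℕ) < n - 1 ∧ ∃ e ∈ G.edgesAt v, e.weight i ≠ 0
    · obtain ⟨i, hi, e₀, he₀, hw₀⟩ := h
      obtain ⟨k₀, hk₀⟩ := htrav i e₀ (TropicalCurve.mem_edgesAt.mp he₀).1 hw₀
      refine ⟨i, fun e he f hf =>
        TropicalCurve.alignedAlong_of_forall_traversed (hinj i) (htrav i)
        (hk₀ (TropicalCurve.mem_carrier_of_mem_edgesAt he₀)) (fun k hvk g hg => ?_) he hf⟩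
      exact or_iff_not_imp_left.mpr (hcon i hi k hvk g
        (TropicalCurve.mem_edgesAt.mp hg).1 (TropicalCurve.mem_edgesAt.mp hg).2)
    · push Not at h
      have haxis : ∀ e ∈ G.edgesAt v, e.IsAxisParallel ⟨n - 1, by omega⟩ := fun e he j hj =>
        h j ((Nat.le_sub_one_of_lt j.isLt).lt_of_ne fun h => hj (Fin.ext h)) e he
      exact ⟨_, fun e he f hf => Or.inr ⟨haxis e he, haxis f hf⟩⟩
  obtain ⟨e, he, f, hf, hef⟩ := G.exists_not_alignedAlong hv i
  exact hef (hi e he f hf)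

/-- if for each direction i we are given d paths in a saturated tropical
curve G of degree d (chains of segments of edges with injective projection to the i-th
coordinate) such that every edge with nonzero i-th weight component is traversed by
one of them, then every vertex of G lies in V₀(P_{ik}) for some direction
i ∈ {1, …, n-1} and some k. Each path (i,k) is encoded by nseg i k ≥ 1 segments
between the points pts i k 0, …, pts i k (nseg i k), each open segment being contained
in an edge of G, with PS i k the union of the closed segments. -/
theorem cover_by_paths (n : ℕ) (hn : 2 ≤ n) (d : ℕ)
    (G : TropicalCurve n (interior (stdSimp n))) (hG : Saturated G)
    (hd : ∀ j : Fin (n + 1), facetCount G j = d)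
    (nseg : Fin n → Fin d → ℕ) (pts : Fin n → Fin d → ℕ → Euc n)
    (PS : Fin n → Fin d → Set (Euc n))
    (hPS : ∀ i k, PS i k =
      ⋃ j ∈ Finset.range (nseg i k), segment ℝ (pts i k j) (pts i k (j + 1)))
    (hpath : ∀ i k, 1 ≤ nseg i k ∧ ∀ j < nseg i k,
      pts i k j ≠ pts i k (j + 1) ∧
      ∃ e ∈ G.edges, openSegment ℝ (pts i k j) (pts i k (j + 1)) ⊆ e.carrier)
    (hinj : ∀ i k, Set.InjOn (fun x => x i) (PS i k))
    (htrav : ∀ i : Fin n, ∀ e ∈ G.edges, e.weight i ≠ 0 →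
      ∃ k : Fin d, e.carrier ⊆ PS i k) :
    ∀ v ∈ G.verts, ∃ i : Fin n, (i : ℕ) < n - 1 ∧ ∃ k : Fin d,
      v ∈ PS i k ∧ ∃ e ∈ G.edges, v ∈ e.ends ∧ ¬ e.carrier ⊆ PS i k ∧
        ∃ j : Fin n, j ≠ i ∧ e.weight j ≠ 0 :=
  cover_by_paths_general n hn d G PS hinj htrav
end
end

section
/- Let n ≥ 2, A > 0 and δ > 0. Let U ⊆ ℝ^n be open and let G be a tropical curve in U with Area(G) ≤ A. Let e be an edge of G and p a point in the relative interior of e such that the closed Euclidean ball of radius δ√n centered at p is contained in U. Then for every i ∈ {1, …, n}, |w_e^i| ≤ A/δ, where w_e^i is the i-th component of a representative of the weight of e. -/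
open Set MeasureTheory
open scoped ENNReal NNReal Classical

noncomputable section

/-!
Orient every edge so that a linear functional `ℓ` (a coordinate, up to sign) increases along it,
and let an edge `f` carry `|ℓ w_f|` units of flow. By balancing, inflow equals outflow at every
vertex. From `p` the edge `e` carries `|ℓ w_e|` units upwards. Keep only the pieces of edges
that start at or above the level of `p`, cut at the sphere `‖x - p‖ = r`: then inside the
ball inflow never exceeds outflow. Pairing this flow with the 1-Lipschitz potential
`min ‖x - p‖ r` shows that it costs at least `r · |ℓ w_e|`, while its cost is at most
`∑_f |ℓ w_f| · length f ≤ Area(G)`. Take `r = δ√n ≥ δ`.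
-/

theorem mul_sub_le_sum_mul_dist {ι X : Type*} [PseudoMetricSpace X] [DecidableEq X]
    (D : Finset ι) (tl hd : ι → X) (c : ι → ℝ) (hc : ∀ d ∈ D, 0 ≤ c d) (p : X) {r : ℝ}
    (hr : 0 ≤ r)
    (hcons : ∀ x, dist x p < r → x ≠ p →
      ∑ d ∈ D with hd d = x, c d ≤ ∑ d ∈ D with tl d = x, c d) :
    r * (∑ d ∈ D with tl d = p, c d - ∑ d ∈ D with hd d = p, c d) ≤
      ∑ d ∈ D, c d * dist (tl d) (hd d) := by
  -- `Φ` is 1-Lipschitz, equals `-r` at `p` and vanishes outside the ball.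
  set Φ : X → ℝ := fun x => min (dist x p) r - r
  set N := insert p (D.image tl ∪ D.image hd)
  have hN : ∀ d ∈ D, tl d ∈ N ∧ hd d ∈ N := fun d hdD => by
    simp only [N, Finset.mem_insert, Finset.mem_union, Finset.mem_image]
    exact ⟨.inr (.inl ⟨d, hdD, rfl⟩), .inr (.inr ⟨d, hdD, rfl⟩)⟩
  set net : X → ℝ := fun x => ∑ d ∈ D with hd d = x, c d - ∑ d ∈ D with tl d = x, c d
  have hpot : ∑ d ∈ D, c d * (Φ (hd d) - Φ (tl d)) = ∑ x ∈ N, Φ x * net x := by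
    simp only [net, mul_sub, Finset.sum_sub_distrib, Finset.mul_sum]
    rw [← Finset.sum_fiberwise_of_maps_to fun d hdD => (hN d hdD).2,
      ← Finset.sum_fiberwise_of_maps_to fun d hdD => (hN d hdD).1]
    congr 1 <;> refine Finset.sum_congr rfl fun x _ => Finset.sum_congr rfl fun d hdD => ?_ <;>
      rw [(Finset.mem_filter.1 hdD).2, mul_comm]
  have hterm : ∀ x ∈ N.erase p, 0 ≤ Φ x * net x := by
    intro x hx
    by_cases hxr : dist x p < r
    · exact mul_nonneg_of_nonpos_of_nonpos (by simp [Φ])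
        (sub_nonpos.2 (hcons x hxr (Finset.ne_of_mem_erase hx)))
    · simp [Φ, min_eq_right (not_lt.1 hxr)]
  calc r * (∑ d ∈ D with tl d = p, c d - ∑ d ∈ D with hd d = p, c d)
      = Φ p * net p := by simp [Φ, net, min_eq_left hr]; ring
    _ ≤ Φ p * net p + ∑ x ∈ N.erase p, Φ x * net x :=
        le_add_of_nonneg_right (Finset.sum_nonneg hterm)
    _ = ∑ d ∈ D, c d * (Φ (hd d) - Φ (tl d)) := by
        rw [Finset.add_sum_erase N (fun x => Φ x * net x) (Finset.mem_insert_self _ _), hpot]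
    _ ≤ ∑ d ∈ D, c d * dist (tl d) (hd d) := by
        refine Finset.sum_le_sum fun d hdD => mul_le_mul_of_nonneg_left ?_ (hc d hdD)
        calc Φ (hd d) - Φ (tl d) ≤ |min (dist (hd d) p) r - min (dist (tl d) p) r| := by
              simp only [Φ, sub_sub_sub_cancel_right]; exact le_abs_self _
          _ ≤ max |dist (hd d) p - dist (tl d) p| |r - r| := abs_min_sub_min_le_max _ _ _ _
          _ ≤ dist (tl d) (hd d) := by
              simpa [dist_comm (tl d)] using abs_dist_sub_le (hd d) (tl d) p

theorem exists_mem_segment_segment_subset_closedBall {E : Type*} [NormedAddCommGroup E]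
    [NormedSpace ℝ E] {p x : E} {r : ℝ} (hx : x ∈ Metric.closedBall p r) (y : E) :
    ∃ z ∈ segment ℝ x y, segment ℝ x z ⊆ Metric.closedBall p r ∧
      (z ∈ Metric.ball p r → z = y) := by
  by_cases hy : y ∈ Metric.closedBall p r
  · exact ⟨y, right_mem_segment ℝ x y, (convex_closedBall p r).segment_subset hx hy,
      fun _ => rfl⟩
  obtain ⟨z, hz, hzr⟩ := (convex_segment x y).isPreconnected.intermediate_value
    (left_mem_segment ℝ x y) (right_mem_segment ℝ x y)
    (continuous_id.dist continuous_const).continuousOn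
    ⟨Metric.mem_closedBall.1 hx, (not_le.1 hy).le⟩
  have hz' : z ∈ Metric.sphere p r := hzr
  exact ⟨z, hz, (convex_closedBall p r).segment_subset hx (Metric.sphere_subset_closedBall hz'),
    fun h => (Metric.sphere_disjoint_ball.ne_of_mem hz' h rfl).elim⟩

theorem edist_le_hausdorffMeasure_of_segment_subset {E : Type*} [NormedAddCommGroup E]
    [NormedSpace ℝ E] [MeasurableSpace E] [BorelSpace E] {x y : E} {s : Set E}
    (h : segment ℝ x y ⊆ s) : edist x y ≤ μH[1] s :=
  hausdorffMeasure_segment x y ▸ measure_mono h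

theorem segment_subset_rayTo {n : ℕ} {v u y : Euc n} {T : ℝ≥0∞} (hy : y ∈ rayTo v u T) :
    segment ℝ y v ⊆ rayTo v u T := by
  obtain ⟨s, hs, hsT, rfl⟩ := hy
  rintro z ⟨a, b, ha, hb, hab, rfl⟩
  refine ⟨a * s, mul_nonneg ha hs, ?_, by rw [eq_sub_of_add_eq' hab]; module⟩
  exact (ENNReal.ofReal_le_ofReal (mul_le_of_le_one_left hs (by linarith))).trans_lt hsT

theorem sum_smul_intVec_eq_zero {n : ℕ} {ι : Type*} {s : Finset ι} {a : ι → ℤ}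
    {w : ι → Fin n → ℤ} (h : ∑ k ∈ s, a k • w k = 0) :
    ∑ k ∈ s, (a k : ℝ) • intVec (w k) = 0 := by
  ext j
  simpa [intVec] using congrArg (fun v : Fin n → ℤ => (v j : ℝ)) h

namespace TropEdge

variable {n : ℕ} (f : TropEdge n) (ℓ : Euc n →ₗ[ℝ] ℝ) {p x w tl hd : Euc n} {r : ℝ}

def IsOutward (x w : Euc n) : Prop :=
  ∃ θ > 0, ∀ t : ℝ, 0 < t → t < θ → x + t • w ∈ f.carrier

structure IsDart (p : Euc n) (r : ℝ) (tl hd : Euc n) : Prop where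
  tail_mem : tl ∈ f.carrier
  edist_le : edist tl hd ≤ μH[1] f.carrier
  head_mem_ends : ℓ tl < ℓ hd → dist hd p < r → hd ∈ f.ends
  tail_eq : ∀ x ∈ f.ends, dist x p < r → ℓ p < ℓ x → ∀ w, f.IsOutward x w → 0 < ℓ w →
    tl = x ∧ ℓ x < ℓ hd

/- Only darts starting at or above the level of `p` carry flow. This keeps inflow at most
outflow at every point of the ball, including the lower end of the edge through `p`, which is
only followed upwards from `p`. -/
def dartCap (p tl hd : Euc n) : ℝ :=
  if ℓ p ≤ ℓ tl ∧ ℓ tl < ℓ hd then |ℓ f.wR| else 0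

theorem dartCap_nonneg (p tl hd : Euc n) : 0 ≤ f.dartCap ℓ p tl hd := by
  unfold dartCap; split_ifs <;> positivity

theorem dartCap_le_abs (p tl hd : Euc n) : f.dartCap ℓ p tl hd ≤ |ℓ f.wR| := by
  unfold dartCap; split_ifs <;> simp

variable {f ℓ}

theorem IsDart.lt_and_mem_ends_of_dartCap_ne_zero (h : f.IsDart ℓ p r tl hd)
    (hc : f.dartCap ℓ p tl hd ≠ 0) (hhd : dist hd p < r) : ℓ p < ℓ hd ∧ hd ∈ f.ends := by
  have hcond : ℓ p ≤ ℓ tl ∧ ℓ tl < ℓ hd := by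
    by_contra hcond
    exact hc (if_neg hcond)
  exact ⟨hcond.1.trans_lt hcond.2, h.head_mem_ends hcond.2 hhd⟩

theorem IsDart.tail_eq_and_le_dartCap (h : f.IsDart ℓ p r tl hd) (hx : x ∈ f.ends)
    (hxr : dist x p < r) (hpx : ℓ p < ℓ x) (hw : f.IsOutward x w) (hℓw : 0 < ℓ w)
    (habs : |ℓ w| = |ℓ f.wR|) : tl = x ∧ ℓ w ≤ f.dartCap ℓ p tl hd := by
  obtain ⟨rfl, hlt⟩ := h.tail_eq x hx hxr hpx w hw hℓw
  refine ⟨rfl, ?_⟩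
  rw [dartCap, if_pos ⟨hpx.le, hlt⟩, ← habs]
  exact le_abs_self _

end TropEdge

namespace TropicalCurve

variable {n : ℕ} {U : Set (Euc n)} (G : TropicalCurve n U) (ℓ : Euc n →ₗ[ℝ] ℝ)
  {e f : TropEdge n} {p x y : Euc n} {r : ℝ}

theorem mem_verts_of_mem_ends (hf : f ∈ G.edges) (hx : x ∈ f.ends) : x ∈ G.verts := by
  rcases G.edge_shape f hf with ⟨a, ha, b, hb, -, hends, -⟩ | ⟨v, hv, -, -, -, -, hends, -⟩ <;>
    simp only [hends, Finset.mem_insert, Finset.mem_singleton] at hx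
  · rcases hx with rfl | rfl <;> assumption
  · exact hx ▸ hv

theorem ends_nonempty (hf : f ∈ G.edges) : f.ends.Nonempty := by
  rcases G.edge_shape f hf with ⟨a, -, b, -, -, hends, -⟩ | ⟨v, -, -, -, -, -, hends, -⟩ <;>
    simp [hends]

theorem mem_carrier_of_mem_ends (hf : f ∈ G.edges) (hx : x ∈ f.ends) : x ∈ f.carrier := by
  rcases G.edge_shape f hf with ⟨a, -, b, -, -, hends, hcar, -⟩ |
      ⟨v, hv, u, -, T, hT, hends, hcar, -⟩ <;>
    simp only [hends, Finset.mem_insert, Finset.mem_singleton] at hx <;> rw [hcar]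
  · rcases hx with rfl | rfl
    exacts [left_mem_segment ℝ _ _, right_mem_segment ℝ _ _]
  · subst hx
    exact ⟨⟨0, le_rfl, by simpa using hT, by simp⟩, G.verts_mem _ hv⟩

theorem exists_eq_add_smul_wR (hf : f ∈ G.edges) (hx : x ∈ f.ends) :
    ∃ c : ℝ, c ≠ 0 ∧ ∀ y ∈ f.carrier, ∃ s : ℝ, 0 ≤ s ∧ y = x + (s * c) • f.wR := by
  rcases G.edge_shape f hf with ⟨a, -, b, -, -, hends, hcar, -, c, hc, hba⟩ |
      ⟨v, -, u, -, T, -, hends, hcar, -, c, hc, rfl⟩ <;>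
    simp only [hends, Finset.mem_insert, Finset.mem_singleton] at hx
  · rcases hx with rfl | rfl
    · refine ⟨c, hc, fun y hy => ?_⟩
      rw [hcar, segment_eq_image'] at hy
      obtain ⟨s, hs, rfl⟩ := hy
      exact ⟨s, hs.1, by rw [hba, mul_smul]⟩
    · refine ⟨-c, neg_ne_zero.2 hc, fun y hy => ?_⟩
      rw [hcar, segment_symm, segment_eq_image'] at hy
      obtain ⟨s, hs, rfl⟩ := hy
      exact ⟨s, hs.1, by rw [← neg_sub, hba]; module⟩
  · subst hx
    refine ⟨c, hc, fun y hy => ?_⟩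
    rw [hcar] at hy
    obtain ⟨⟨s, hs, -, rfl⟩, -⟩ := hy
    exact ⟨s, hs, by rw [mul_smul]⟩

theorem apply_lt_apply_of_isOutward (hf : f ∈ G.edges) (hx : x ∈ f.ends) {w : Euc n}
    (hw : f.IsOutward x w) (hℓw : 0 < ℓ w) (hy : y ∈ f.carrier) (hyx : y ≠ x) :
    ℓ x < ℓ y := by
  obtain ⟨c, -, hc⟩ := G.exists_eq_add_smul_wR hf hx
  obtain ⟨θ, hθ, hθw⟩ := hw
  obtain ⟨s, hs, hsw⟩ := hc _ (hθw (θ / 2) (by positivity) (by linarith))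
  obtain ⟨s', hs', rfl⟩ := hc y hy
  have hs'0 : s' ≠ 0 := by rintro rfl; simp at hyx
  have hdir : (θ / 2) * ℓ w = s * (c * ℓ f.wR) := by
    simpa [mul_assoc] using congrArg ℓ hsw
  have hcw : 0 < c * ℓ f.wR := pos_of_mul_pos_right (hdir ▸ by positivity) hs
  simp only [map_add, map_smul, smul_eq_mul, mul_assoc, lt_add_iff_pos_right]
  exact mul_pos (lt_of_le_of_ne hs' (Ne.symm hs'0)) hcw

theorem apply_ne_apply_of_mem_carrier (hf : f ∈ G.edges)
    (hx : x ∈ f.ends) (hy : y ∈ f.carrier) (hyx : y ≠ x) (hℓ : ℓ f.wR ≠ 0) : ℓ y ≠ ℓ x := by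
  obtain ⟨c, hc, hcy⟩ := G.exists_eq_add_smul_wR hf hx
  obtain ⟨s, -, rfl⟩ := hcy y hy
  have hs : s ≠ 0 := by rintro rfl; simp at hyx
  simp [mul_assoc, hs, hc, hℓ]

theorem segment_inter_subset_carrier (hf : f ∈ G.edges) (hx : x ∈ f.carrier) (hy : y ∈ f.ends) :
    segment ℝ x y ∩ U ⊆ f.carrier := by
  have hy' := G.mem_carrier_of_mem_ends hf hy
  rcases G.edge_shape f hf with ⟨a, -, b, -, -, -, hcar, -⟩ | ⟨v, -, u, -, T, -, hends, hcar, -⟩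
  · rw [hcar] at hx hy' ⊢
    exact inter_subset_left.trans ((convex_segment a b).segment_subset hx hy')
  · obtain rfl : y = v := by simpa [hends] using hy
    rw [hcar] at hx ⊢
    exact inter_subset_inter_left U (segment_subset_rayTo hx.1)

theorem exists_isDart (hball : Metric.closedBall p r ⊆ U) (hf : f ∈ G.edges) :
    ∃ tl hd, f.IsDart ℓ p r tl hd := by
  rcases G.edge_shape f hf with ⟨a, -, b, -, hab, hends, hcar, -⟩ |
      ⟨v, -, u, -, T, -, hends, hcar, hcl, -⟩
  · wlog hℓ : ℓ a ≤ ℓ b generalizing a b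
    · exact this b a hab.symm (by rw [hends, Finset.pair_comm]) (by rw [hcar, segment_symm])
        (le_of_not_ge hℓ)
    have ha : a ∈ f.carrier := hcar ▸ left_mem_segment ℝ a b
    have hb : b ∈ f.carrier := hcar ▸ right_mem_segment ℝ a b
    refine ⟨a, b, ha, edist_le_hausdorffMeasure_of_segment_subset hcar.ge,
      fun _ _ => by simp [hends], fun x hx _ _ w hw hℓw => ?_⟩
    rw [hends, Finset.mem_insert, Finset.mem_singleton] at hx
    rcases hx with rfl | rfl
    · exact ⟨rfl, G.apply_lt_apply_of_isOutward ℓ hf (by simp [hends]) hw hℓw hb hab.symm⟩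
    · exact absurd hℓ (not_le.2 <|
        G.apply_lt_apply_of_isOutward ℓ hf (by simp [hends]) hw hℓw ha hab)
  · have hv : v ∈ f.ends := by simp [hends]
    have hv' := G.mem_carrier_of_mem_ends hf hv
    by_cases hvp : dist v p < r
    swap
    · refine ⟨v, v, hv', by simp, fun h => absurd h (lt_irrefl _), fun x hx hxp => ?_⟩
      obtain rfl : x = v := by simpa [hends] using hx
      exact absurd hxp hvp
    obtain ⟨y, hy, hyr⟩ : ∃ y ∈ f.carrier, y ∉ Metric.closedBall p r := by
      by_contra! h
      rw [hcar] at h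
      exact hcl ((closure_minimal h Metric.isClosed_closedBall).trans hball)
    obtain ⟨q, hq, hvq, hqy⟩ :=
      exists_mem_segment_segment_subset_closedBall (Metric.mem_closedBall.2 hvp.le) y
    have hqr : q ∉ Metric.ball p r := fun h => hyr (hqy h ▸ Metric.ball_subset_closedBall h)
    have hseg : segment ℝ v q ⊆ f.carrier := fun z hz =>
      G.segment_inter_subset_carrier hf hy hv ⟨segment_symm ℝ v y ▸
        (convex_segment v y).segment_subset (left_mem_segment ℝ v y) hq hz, hball (hvq hz)⟩
    refine ⟨v, q, hv', edist_le_hausdorffMeasure_of_segment_subset hseg,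
      fun _ h => absurd h hqr, fun x hx _ _ w hw hℓw => ?_⟩
    obtain rfl : x = v := by simpa [hends] using hx
    refine ⟨rfl, G.apply_lt_apply_of_isOutward ℓ hf hx hw hℓw (hseg (right_mem_segment ℝ x q)) ?_⟩
    rintro rfl
    exact hqr hvp

/- The dart runs from `p` towards an endpoint `y` of `f`. Running away from the vertex of an
unbounded edge instead could fail: `rayTo v u T ∩ U` need not be connected and may end inside
the ball. -/
theorem exists_isDart_of_mem_carrier (hr : 0 < r) (hball : Metric.closedBall p r ⊆ U)
    (hf : f ∈ G.edges) (hp : p ∈ f.carrier) (hp' : p ∉ f.ends) (hy : y ∈ f.ends)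
    (hℓ : ℓ p < ℓ y) : ∃ hd, f.IsDart ℓ p r p hd ∧ ℓ p < ℓ hd := by
  obtain ⟨z, hz, hpz, hzy⟩ :=
    exists_mem_segment_segment_subset_closedBall (Metric.mem_closedBall_self (x := p) hr.le) y
  have hzp : z ≠ p := by
    rintro rfl
    exact hℓ.ne (congrArg ℓ (hzy (Metric.mem_ball_self hr)))
  have hℓz : ℓ p < ℓ z := by
    rw [segment_eq_image'] at hz
    obtain ⟨t, ht, rfl⟩ := hz
    have ht0 : t ≠ 0 := by rintro rfl; simp at hzp
    simp only [map_add, map_smul, map_sub, smul_eq_mul, lt_add_iff_pos_right]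
    exact mul_pos (lt_of_le_of_ne ht.1 (Ne.symm ht0)) (sub_pos.2 hℓ)
  refine ⟨z, ⟨hp, edist_le_hausdorffMeasure_of_segment_subset fun w hw => ?_,
    fun _ h => hzy h ▸ hy, fun x hx _ hpx w hw hℓw => ?_⟩, hℓz⟩
  · exact G.segment_inter_subset_carrier hf hp hy
      ⟨(convex_segment p y).segment_subset (left_mem_segment ℝ p y) hz hw, hball (hpz hw)⟩
  · exact absurd hpx (lt_asymm <|
      G.apply_lt_apply_of_isOutward ℓ hf hx hw hℓw hp fun h => hp' (h ▸ hx))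

theorem dartCap_le_max_neg (hf : f ∈ G.edges) {tl hd : Euc n} (hdart : f.IsDart ℓ p r tl hd)
    (hhd : dist hd p < r) {w : Euc n} (hw : f.IsOutward hd w) (habs : |ℓ w| = |ℓ f.wR|) :
    f.dartCap ℓ p tl hd ≤ max (-ℓ w) 0 := by
  unfold TropEdge.dartCap
  split_ifs with hcond
  · have hw0 : ℓ w ≤ 0 := by
      by_contra! h
      exact lt_asymm hcond.2 <| G.apply_lt_apply_of_isOutward ℓ hf
        (hdart.head_mem_ends hcond.2 hhd) hw h hdart.tail_mem (ne_of_apply_ne ℓ hcond.2.ne)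
    rw [← habs, abs_of_nonpos hw0]
    exact le_max_left _ _
  · exact le_max_right _ _

theorem sum_dartCap_head_le_sum_dartCap_tail_of_mem_verts {tl hd : TropEdge n → Euc n}
    (hdart : ∀ f ∈ G.edges, f.IsDart ℓ p r (tl f) (hd f)) (hx : dist x p < r)
    (hpx : ℓ p < ℓ x) (hxv : x ∈ G.verts) :
    ∑ f ∈ G.edges with hd f = x, f.dartCap ℓ p (tl f) (hd f) ≤
      ∑ f ∈ G.edges with tl f = x, f.dartCap ℓ p (tl f) (hd f) := by
  set c : TropEdge n → ℝ := fun f => f.dartCap ℓ p (tl f) (hd f)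
  have hc : ∀ f, 0 ≤ c f := fun f => f.dartCap_nonneg ℓ p _ _
  obtain ⟨ε, hε, hbal⟩ := G.balanced x hxv
  set φ : TropEdge n → ℝ := fun f => ℓ ((ε f : ℝ) • f.wR)
  have hφ : ∑ f ∈ G.edges with x ∈ f.ends, φ f = 0 := by
    simp only [φ, ← map_sum, TropEdge.wR, sum_smul_intVec_eq_zero hbal, map_zero]
  have hout : ∀ f ∈ G.edges, x ∈ f.ends →
      f.IsOutward x ((ε f : ℝ) • f.wR) ∧ |φ f| = |ℓ f.wR| := by
    intro f hf hxf
    obtain ⟨hε1, θ, hθ, hθf⟩ := hε f hf hxf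
    refine ⟨⟨θ, hθ, fun t ht htθ => by simpa [smul_smul] using hθf t ht htθ⟩, ?_⟩
    rcases hε1 with h | h <;> simp [φ, h]
  calc ∑ f ∈ G.edges with hd f = x, c f
      ≤ ∑ f ∈ G.edges with x ∈ f.ends, max (-φ f) 0 := by
        rw [Finset.sum_filter, Finset.sum_filter]
        refine Finset.sum_le_sum fun f hf => ?_
        split_ifs with hfx hxf
        · subst hfx
          exact G.dartCap_le_max_neg ℓ hf (hdart f hf) hx (hout f hf hxf).1 (hout f hf hxf).2
        · subst hfx
          refine le_of_eq (not_not.1 fun hcf => hxf ?_)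
          exact ((hdart f hf).lt_and_mem_ends_of_dartCap_ne_zero hcf hx).2
        · exact le_max_right _ _
        · exact le_rfl
    _ = ∑ f ∈ G.edges with x ∈ f.ends, max (φ f) 0 := by
        have := Finset.sum_sub_distrib (fun f => max (φ f) 0) (fun f => max (-φ f) 0)
          (s := G.edges.filter (x ∈ ·.ends))
        simp only [max_zero_sub_eq_self] at this
        linarith
    _ ≤ ∑ f ∈ G.edges with tl f = x, c f := by
        rw [Finset.sum_filter, Finset.sum_filter]
        refine Finset.sum_le_sum fun f hf => ?_
        split_ifs with hxf htl <;> rcases le_or_gt (φ f) 0 with hφf | hφf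
        · exact (max_eq_right hφf).trans_le (hc f)
        · exact (max_eq_left hφf.le).trans_le ((hdart f hf).tail_eq_and_le_dartCap hxf hx hpx
            (hout f hf hxf).1 hφf (hout f hf hxf).2).2
        · exact (max_eq_right hφf).le
        · exact absurd ((hdart f hf).tail_eq_and_le_dartCap hxf hx hpx
            (hout f hf hxf).1 hφf (hout f hf hxf).2).1 htl
        all_goals first | exact hc f | exact le_rfl

theorem sum_dartCap_head_le_sum_dartCap_tail {tl hd : TropEdge n → Euc n}
    (hdart : ∀ f ∈ G.edges, f.IsDart ℓ p r (tl f) (hd f)) (hx : dist x p < r) :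
    ∑ f ∈ G.edges with hd f = x, f.dartCap ℓ p (tl f) (hd f) ≤
      ∑ f ∈ G.edges with tl f = x, f.dartCap ℓ p (tl f) (hd f) := by
  by_cases hvx : ℓ p < ℓ x ∧ x ∈ G.verts
  · exact G.sum_dartCap_head_le_sum_dartCap_tail_of_mem_verts ℓ hdart hx hvx.1 hvx.2
  refine (Finset.sum_eq_zero fun f hf => ?_).trans_le
    (Finset.sum_nonneg fun f _ => f.dartCap_nonneg ℓ p _ _)
  obtain ⟨hfG, rfl⟩ := Finset.mem_filter.1 hf
  by_contra hcf
  obtain ⟨hpx, hxf⟩ := (hdart f hfG).lt_and_mem_ends_of_dartCap_ne_zero hcf hx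
  exact hvx ⟨hpx, G.mem_verts_of_mem_ends hfG hxf⟩

theorem exists_isDart_family (hr : 0 < r) (hball : Metric.closedBall p r ⊆ U)
    (he : e ∈ G.edges) (hp : p ∈ e.carrier) (hp' : p ∉ e.ends) (hy : y ∈ e.ends)
    (hℓ : ℓ p < ℓ y) :
    ∃ tl hd : TropEdge n → Euc n,
      (∀ f ∈ G.edges, f.IsDart ℓ p r (tl f) (hd f)) ∧ tl e = p ∧ ℓ p < ℓ (hd e) := by
  obtain ⟨hde, hdarte, hlt⟩ := G.exists_isDart_of_mem_carrier ℓ hr hball he hp hp' hy hℓ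
  choose! tl hd hdart using fun f (hf : f ∈ G.edges) => G.exists_isDart ℓ hball hf
  refine ⟨Function.update tl e p, Function.update hd e hde, fun f hf => ?_, by simp,
    by simpa using hlt⟩
  by_cases hfe : f = e
  · subst hfe
    simpa using hdarte
  · simpa [hfe] using hdart f hf

theorem ofReal_mul_abs_le_of_lt (hr : 0 < r) (hball : Metric.closedBall p r ⊆ U)
    (he : e ∈ G.edges) (hp : p ∈ e.carrier) (hp' : p ∉ e.ends) (hy : y ∈ e.ends)
    (hℓ : ℓ p < ℓ y) :
    ENNReal.ofReal (r * |ℓ e.wR|) ≤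
      ∑ f ∈ G.edges, ENNReal.ofReal |ℓ f.wR| * μH[1] f.carrier := by
  obtain ⟨tl, hd, hdart, htle, hlte⟩ := G.exists_isDart_family ℓ hr hball he hp hp' hy hℓ
  set c : TropEdge n → ℝ := fun f => f.dartCap ℓ p (tl f) (hd f)
  have hc : ∀ f ∈ G.edges, 0 ≤ c f := fun f _ => f.dartCap_nonneg ℓ p _ _
  have hinflow : ∑ f ∈ G.edges with hd f = p, c f = 0 := by
    refine Finset.sum_eq_zero fun f hf => if_neg fun hcond => ?_
    rw [(Finset.mem_filter.1 hf).2] at hcond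
    exact (hcond.1.trans_lt hcond.2).false
  have houtflow : |ℓ e.wR| ≤ ∑ f ∈ G.edges with tl f = p, c f := by
    have hce : c e = |ℓ e.wR| := if_pos ⟨htle ▸ le_rfl, htle ▸ hlte⟩
    exact hce ▸ Finset.single_le_sum (fun f hf => hc f (Finset.mem_filter.1 hf).1)
      (Finset.mem_filter.2 ⟨he, htle⟩)
  have hflow := mul_sub_le_sum_mul_dist G.edges tl hd c hc p hr.le
    fun x hx _ => G.sum_dartCap_head_le_sum_dartCap_tail ℓ hdart hx
  rw [hinflow, sub_zero] at hflow
  calc ENNReal.ofReal (r * |ℓ e.wR|)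
      ≤ ENNReal.ofReal (∑ f ∈ G.edges, c f * dist (tl f) (hd f)) :=
        ENNReal.ofReal_le_ofReal ((mul_le_mul_of_nonneg_left houtflow hr.le).trans hflow)
    _ = ∑ f ∈ G.edges, ENNReal.ofReal (c f) * edist (tl f) (hd f) := by
        rw [ENNReal.ofReal_sum_of_nonneg fun f hf => mul_nonneg (hc f hf) dist_nonneg]
        refine Finset.sum_congr rfl fun f hf => ?_
        rw [ENNReal.ofReal_mul (hc f hf), edist_dist]
    _ ≤ ∑ f ∈ G.edges, ENNReal.ofReal |ℓ f.wR| * μH[1] f.carrier :=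
        Finset.sum_le_sum fun f hf => mul_le_mul'
          (ENNReal.ofReal_le_ofReal (f.dartCap_le_abs ℓ p _ _)) (hdart f hf).edist_le

theorem ofReal_mul_abs_le (hr : 0 < r) (hball : Metric.closedBall p r ⊆ U)
    (he : e ∈ G.edges) (hp : p ∈ e.carrier) (hp' : p ∉ e.ends) :
    ENNReal.ofReal (r * |ℓ e.wR|) ≤ ∑ f ∈ G.edges, ENNReal.ofReal |ℓ f.wR| * μH[1] f.carrier := by
  by_cases hℓ : ℓ e.wR = 0
  · simp [hℓ]
  obtain ⟨y, hy⟩ := G.ends_nonempty he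
  rcases (G.apply_ne_apply_of_mem_carrier ℓ he hy hp (fun h => hp' (h ▸ hy)) hℓ).lt_or_gt
    with h | h
  · exact G.ofReal_mul_abs_le_of_lt ℓ hr hball he hp hp' hy h
  · simpa using G.ofReal_mul_abs_le_of_lt (-ℓ) hr hball he hp hp' hy (by simpa using h)

end TropicalCurve

theorem weight_bound_general (n : ℕ) (A δ : ℝ) (hA : 0 < A) (hδ : 0 < δ)
    (U : Set (Euc n))
    (G : TropicalCurve n U) (hG : G.area ≤ ENNReal.ofReal A)
    (e : TropEdge n) (he : e ∈ G.edges)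
    (p : Euc n) (hp : p ∈ e.carrier) (hp' : p ∉ e.ends)
    (hball : Metric.closedBall p (δ * Real.sqrt n) ⊆ U) :
    ∀ i : Fin n, ((e.weight i).natAbs : ℝ) ≤ A / δ := by
  intro i
  have hδr : δ ≤ δ * Real.sqrt n :=
    le_mul_of_one_le_right hδ.le (Real.one_le_sqrt.2 (by exact_mod_cast i.pos))
  let ℓ : Euc n →ₗ[ℝ] ℝ := (EuclideanSpace.proj (𝕜 := ℝ) i).toLinearMap
  have hℓ : ∀ f : TropEdge n, |ℓ f.wR| = (f.weight i).natAbs := fun f => by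
    simp [ℓ, TropEdge.wR, intVec, Nat.cast_natAbs]
  have hnorm : ∀ f : TropEdge n, ENNReal.ofReal |ℓ f.wR| ≤ ‖f.wR‖₊ := fun f => by
    rw [← enorm_eq_nnnorm, ← ofReal_norm]
    exact ENNReal.ofReal_le_ofReal (PiLp.norm_apply_le f.wR i)
  have hbound : ENNReal.ofReal (δ * Real.sqrt n * (e.weight i).natAbs) ≤ ENNReal.ofReal A :=
    calc _ = ENNReal.ofReal (δ * Real.sqrt n * |ℓ e.wR|) := by rw [hℓ]
      _ ≤ ∑ f ∈ G.edges, ENNReal.ofReal |ℓ f.wR| * μH[1] f.carrier :=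
          G.ofReal_mul_abs_le ℓ (hδ.trans_le hδr) hball he hp hp'
      _ ≤ G.area := Finset.sum_le_sum fun f _ => by rw [mul_comm]; gcongr; exact hnorm f
      _ ≤ _ := hG
  rw [le_div_iff₀ hδ, mul_comm]
  exact (mul_le_mul_of_nonneg_right hδr (Nat.cast_nonneg _)).trans
    ((ENNReal.ofReal_le_ofReal_iff hA.le).1 hbound)

/-- if G has area at most A and e is an edge with a relative interior
point p whose closed δ√n-ball is contained in U, then every component of the weight of
e is at most A/δ in absolute value. -/
theorem weight_bound (n : ℕ) (hn : 2 ≤ n) (A δ : ℝ) (hA : 0 < A) (hδ : 0 < δ)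
    (U : Set (Euc n)) (hU : IsOpen U)
    (G : TropicalCurve n U) (hG : G.area ≤ ENNReal.ofReal A)
    (e : TropEdge n) (he : e ∈ G.edges)
    (p : Euc n) (hp : p ∈ e.carrier) (hp' : p ∉ e.ends)
    (hball : Metric.closedBall p (δ * Real.sqrt n) ⊆ U) :
    ∀ i : Fin n, ((e.weight i).natAbs : ℝ) ≤ A / δ :=
  weight_bound_general n A δ hA hδ U G hG e he p hp hp' hball
end
end
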